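/- Let A and B be finite connected graphs. If the Cartesian product A□B is generalized t-edge distance-balanced, then for every edge a₁a₂ ∈ E(A), either m_{a₁}(a₁a₂)·|V(B)| + n_{a₁}(a₁a₂)·|E(B)| = t·(m_{a₂}(a₁a₂)·|V(B)| + n_{a₂}(a₁a₂)·|E(B)|) or the symmetric equality holds. -/

import Mathlib

/-! Distances in `A □ B` add up coordinatewise. Hence, for the edge `(a₁, b)(a₂, b)`, a horizontal
edge `e × {w}` is closer to `(a₁, b)` exactly when `e` is closer to `a₁` in `A`, and a vertical
edge `{v} × f` exactly when the vertex `v` is closer to `a₁`. Counting both kinds gives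
`m_{(a₁,b)} = m_{a₁}·|V(B)| + n_{a₁}·|E(B)|`, so the balance condition of `A □ B` on this edge is
the claimed alternative. -/

open SimpleGraph Finset

/-- Distance from a vertex to an edge: the minimum distance to its endpoints. -/
noncomputable def edgeDist {V : Type*} (G : SimpleGraph V) (v : V) (e : Sym2 V) : ℕ :=
  Sym2.lift ⟨fun x y => min (G.dist v x) (G.dist v y), fun _ _ => min_comm _ _⟩ e

/-- Number of edges strictly closer to `α` than to `β`. -/
noncomputable def mCount {V : Type*} (G : SimpleGraph V) (α β : V) : ℕ :=
  {e ∈ G.edgeSet | edgeDist G α e < edgeDist G β e}.ncard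

/-- Number of vertices strictly closer to `α` than to `β`. -/
noncomputable def nCount {V : Type*} (G : SimpleGraph V) (α β : V) : ℕ :=
  {w : V | G.dist w α < G.dist w β}.ncard

/-- Number of edges other than `αβ` itself equidistant from `α` and `β`. -/
noncomputable def m0Count {V : Type*} (G : SimpleGraph V) (α β : V) : ℕ :=
  {e ∈ G.edgeSet | e ≠ s(α, β) ∧ edgeDist G α e = edgeDist G β e}.ncard

/-- The distance-partition class `D'^i_j(αβ)`: edges at distance `i` from `α`
and `j` from `β`. -/
def Dset {V : Type*} (G : SimpleGraph V) (α β : V) (i j : ℕ) : Set (Sym2 V) :=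
  {e ∈ G.edgeSet | edgeDist G α e = i ∧ edgeDist G β e = j}

/-- Generalized t-edge distance-balanced graph. -/
def GtEDB {V : Type*} (G : SimpleGraph V) (t : ℕ) : Prop :=
  ∀ α β : V, G.Adj α β →
    mCount G α β = t * mCount G β α ∨ mCount G β α = t * mCount G α β

/-- The lexicographic product of two simple graphs. -/
def lexProd {V W : Type*} (A : SimpleGraph V) (B : SimpleGraph W) :
    SimpleGraph (V × W) where
  Adj p q := A.Adj p.1 q.1 ∨ (p.1 = q.1 ∧ B.Adj p.2 q.2)
  symm := by
    refine ⟨?_⟩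
    rintro p q (h | ⟨h1, h2⟩)
    · exact Or.inl h.symm
    · exact Or.inr ⟨h1.symm, h2.symm⟩
  loopless := by
    refine ⟨?_⟩
    rintro p (h | ⟨_, h⟩)
    · exact A.loopless.irrefl _ h
    · exact B.loopless.irrefl _ h

namespace SimpleGraph

variable {α β : Type*} {G : SimpleGraph α} {H : SimpleGraph β}

lemma dist_boxProd {x y : α × β} (hG : G.Reachable x.1 y.1) (hH : H.Reachable x.2 y.2) :
    (G □ H).dist x y = G.dist x.1 y.1 + H.dist x.2 y.2 := by
  have hGH : (G □ H).Reachable x y := reachable_boxProd.2 ⟨hG, hH⟩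
  apply Nat.cast_injective (R := ℕ∞)
  rw [Nat.cast_add, hGH.coe_dist_eq_edist, hG.coe_dist_eq_edist, hH.coe_dist_eq_edist,
    edist_boxProd]

lemma Connected.dist_boxProd (hG : G.Connected) (hH : H.Connected) (x y : α × β) :
    (G □ H).dist x y = G.dist x.1 y.1 + H.dist x.2 y.2 :=
  SimpleGraph.dist_boxProd (hG.preconnected _ _) (hH.preconnected _ _)

def horizontalEdge (p : Sym2 α × β) : Sym2 (α × β) := p.1.map (·, p.2)

def verticalEdge (p : α × Sym2 β) : Sym2 (α × β) := p.2.map (p.1, ·)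

lemma horizontalEdge_injective : Function.Injective (horizontalEdge : Sym2 α × β → _) := by
  rintro ⟨e, w⟩ ⟨e', w'⟩ h
  simp only [horizontalEdge] at h
  have he : e = e' := by
    simpa [Sym2.map_map, Function.comp_def] using congrArg (Sym2.map Prod.fst) h
  -- a point `(x, w)` of the left side lies on the right side, which forces `w = w'`
  obtain ⟨_, _, hw⟩ := Sym2.mem_map.1 (h ▸ Sym2.mem_map.2 ⟨_, e.out_fst_mem, rfl⟩)
  simp_all

lemma verticalEdge_injective : Function.Injective (verticalEdge : α × Sym2 β → _) := by
  rintro ⟨v, f⟩ ⟨v', f'⟩ h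
  simp only [verticalEdge] at h
  have hf : f = f' := by
    simpa [Sym2.map_map, Function.comp_def] using congrArg (Sym2.map Prod.snd) h
  obtain ⟨_, _, hv⟩ := Sym2.mem_map.1 (h ▸ Sym2.mem_map.2 ⟨_, f.out_fst_mem, rfl⟩)
  simp_all

lemma edgeDist_boxProd_horizontalEdge (hG : G.Connected) (hH : H.Connected) (a : α) (b : β)
    (p : Sym2 α × β) :
    edgeDist (G □ H) (a, b) (horizontalEdge p) = edgeDist G a p.1 + H.dist b p.2 := by
  obtain ⟨e, w⟩ := p
  induction e using Sym2.ind with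
  | _ x y => simp [horizontalEdge, edgeDist, hG.dist_boxProd hH, Nat.add_min_add_right]

lemma edgeDist_boxProd_verticalEdge (hG : G.Connected) (hH : H.Connected) (a : α) (b : β)
    (p : α × Sym2 β) :
    edgeDist (G □ H) (a, b) (verticalEdge p) = G.dist a p.1 + edgeDist H b p.2 := by
  obtain ⟨v, f⟩ := p
  induction f using Sym2.ind with
  | _ x y => simp [verticalEdge, edgeDist, hG.dist_boxProd hH, Nat.add_min_add_left]

lemma edgeSet_boxProd :
    (G □ H).edgeSet = horizontalEdge '' (G.edgeSet ×ˢ Set.univ) ∪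
      verticalEdge '' (Set.univ ×ˢ H.edgeSet) := by
  refine subset_antisymm (fun e ↦ ?_) <| Set.union_subset
    (Set.image_subset_iff.2 fun p hp ↦ (boxProdLeft G H p.2).toHom.map_mem_edgeSet hp.1)
    (Set.image_subset_iff.2 fun p hp ↦ (boxProdRight G H p.1).toHom.map_mem_edgeSet hp.2)
  induction e using Sym2.ind with
  | _ p q =>
    obtain ⟨a, b⟩ := p
    obtain ⟨a', b'⟩ := q
    rw [mem_edgeSet, boxProd_adj]
    rintro (⟨hadj, rfl⟩ | ⟨hadj, rfl⟩)
    · exact Or.inl ⟨(s(a, a'), b), ⟨hadj, trivial⟩, rfl⟩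
    · exact Or.inr ⟨(a, s(b, b')), ⟨trivial, hadj⟩, rfl⟩

/-- The second coordinates of a horizontal edge coincide, those of a vertical edge of `H` do not. -/
lemma disjoint_horizontalEdge_image_verticalEdge_image (s : Set (Sym2 α × β))
    (t : Set (α × Sym2 β)) (ht : ∀ p ∈ t, p.2 ∈ H.edgeSet) :
    Disjoint (horizontalEdge '' s) (verticalEdge '' t) := by
  rw [Set.disjoint_left]
  rintro _ ⟨⟨e, w⟩, -, rfl⟩ ⟨⟨v, f⟩, hvf, hf⟩
  have hsnd := congrArg (Sym2.map Prod.snd) hf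
  simp only [horizontalEdge, verticalEdge, Sym2.map_map, Function.comp_def, Sym2.map_id', id]
    at hsnd
  refine H.not_isDiag_of_mem_edgeSet (ht _ hvf) ?_
  induction e using Sym2.ind with
  | _ x y => simp [hsnd]

lemma ncard_sep_edgeSet_boxProd [Finite α] [Finite β] (P : Sym2 (α × β) → Prop) :
    {e ∈ (G □ H).edgeSet | P e}.ncard =
      {p : Sym2 α × β | p.1 ∈ G.edgeSet ∧ P (horizontalEdge p)}.ncard +
      {p : α × Sym2 β | p.2 ∈ H.edgeSet ∧ P (verticalEdge p)}.ncard := by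
  have hsep : {e ∈ (G □ H).edgeSet | P e} =
      horizontalEdge '' {p : Sym2 α × β | p.1 ∈ G.edgeSet ∧ P (horizontalEdge p)} ∪
      verticalEdge '' {p : α × Sym2 β | p.2 ∈ H.edgeSet ∧ P (verticalEdge p)} := by
    rw [edgeSet_boxProd]
    ext e
    simp only [Set.mem_union, Set.mem_image, Set.mem_prod, Set.mem_univ, Set.mem_ofPred_eq]
    aesop
  rw [hsep, Set.ncard_union_eq (disjoint_horizontalEdge_image_verticalEdge_image _ _
      fun _ hp ↦ hp.1), Set.ncard_image_of_injective _ horizontalEdge_injective,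
    Set.ncard_image_of_injective _ verticalEdge_injective]

end SimpleGraph

lemma mCount_boxProd_left {V W : Type*} [Finite V] [Finite W] {A : SimpleGraph V}
    {B : SimpleGraph W} (hA : A.Connected) (hB : B.Connected) (a₁ a₂ : V) (b : W) :
    mCount (A □ B) (a₁, b) (a₂, b) =
      mCount A a₁ a₂ * Nat.card W + nCount A a₁ a₂ * B.edgeSet.ncard := by
  have horizontal : {p : Sym2 V × W | p.1 ∈ A.edgeSet ∧
      edgeDist (A □ B) (a₁, b) (horizontalEdge p) < edgeDist (A □ B) (a₂, b) (horizontalEdge p)} =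
      {e ∈ A.edgeSet | edgeDist A a₁ e < edgeDist A a₂ e} ×ˢ Set.univ := by
    ext p
    simp [edgeDist_boxProd_horizontalEdge hA hB]
  have vertical : {p : V × Sym2 W | p.2 ∈ B.edgeSet ∧
      edgeDist (A □ B) (a₁, b) (verticalEdge p) < edgeDist (A □ B) (a₂, b) (verticalEdge p)} =
      {v | A.dist v a₁ < A.dist v a₂} ×ˢ B.edgeSet := by
    ext p
    simp [edgeDist_boxProd_verticalEdge hA hB, dist_comm, and_comm]
  rw [mCount, ncard_sep_edgeSet_boxProd, horizontal, vertical, Set.ncard_prod, Set.ncard_prod,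
    Set.ncard_univ, mCount, nCount]

/-- if `A □ B` is Gt-EDB, then for every edge `a₁a₂` of `A` the
weighted counts satisfy one of the two balance equalities. -/
theorem stmt10 {V W : Type*} [Fintype V] [Fintype W]
    (A : SimpleGraph V) (B : SimpleGraph W) (t : ℕ)
    (hA : A.Connected) (hB : B.Connected)
    (hGt : GtEDB (A.boxProd B) t) :
    ∀ a₁ a₂ : V, A.Adj a₁ a₂ →
      mCount A a₁ a₂ * Fintype.card W + nCount A a₁ a₂ * B.edgeSet.ncard
        = t * (mCount A a₂ a₁ * Fintype.card W + nCount A a₂ a₁ * B.edgeSet.ncard) ∨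
      mCount A a₂ a₁ * Fintype.card W + nCount A a₂ a₁ * B.edgeSet.ncard
        = t * (mCount A a₁ a₂ * Fintype.card W + nCount A a₁ a₂ * B.edgeSet.ncard) := by
  intro a₁ a₂ hadj
  obtain ⟨b⟩ := hB.nonempty
  simpa only [mCount_boxProd_left hA hB, Nat.card_eq_fintype_card] using
    hGt (a₁, b) (a₂, b) (boxProd_adj_left.2 hadj)
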